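/- arXiv:1704.00820 — 2 statements merged into one kernel-verified Lean document; each statement's English description precedes it below -/
import Mathlib

section
/- Let B → X → Y → B̂ with B, B̂ binary and Pr[B=0] = a. Then Pr[B ≠ B̂] ≥ (1/2)(1 − √(1 − 4a(1−a)(1 − ρ_m(X;Y)²))). -/
open Finset Real

/-- Maximal correlation of a joint pmf `r` on `α × β`: the supremum of
`E[f(X)g(Y)]` over zero-mean, unit-second-moment `f`, `g`. -/
noncomputable def maxCorr {α β : Type*} [Fintype α] [Fintype β]
    (r : α → β → ℝ) : ℝ :=
  sSup { t : ℝ | ∃ f : α → ℝ, ∃ g : β → ℝ,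
    (∑ x, ∑ y, f x * r x y) = 0 ∧ (∑ x, ∑ y, g y * r x y) = 0 ∧
    (∑ x, ∑ y, (f x) ^ 2 * r x y) = 1 ∧ (∑ x, ∑ y, (g y) ^ 2 * r x y) = 1 ∧
    t = ∑ x, ∑ y, f x * g y * r x y }

section Helpers

variable {α β : Type*} [Fintype α] [Fintype β]

lemma scalar_ineq (a b ρ : ℝ) (ha0 : 0 ≤ a) (ha1 : a ≤ 1) (hb0 : 0 ≤ b)
    (hb1 : b ≤ 1) (hρ : 0 ≤ ρ) :
    a + b - 2*a*b - 2*ρ*Real.sqrt (a*(1-a)) * Real.sqrt (b*(1-b)) ≥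
      (1/2) * (1 - Real.sqrt (1 - 4*a*(1-a)*(1 - ρ^2))) := by
  set sA := Real.sqrt (a*(1-a)) with hsA
  set sB := Real.sqrt (b*(1-b)) with hsB
  set s := Real.sqrt (1 - 4*a*(1-a)*(1 - ρ^2)) with hs
  have hA : sA^2 = a*(1-a) := Real.sq_sqrt (by nlinarith)
  have hB : sB^2 = b*(1-b) := Real.sq_sqrt (by nlinarith)
  have hsA0 : 0 ≤ sA := Real.sqrt_nonneg _
  have hsB0 : 0 ≤ sB := Real.sqrt_nonneg _
  have hS : s^2 = 1 - 4*a*(1-a)*(1 - ρ^2) := Real.sq_sqrt (by nlinarith [sq_nonneg (1-2*a), sq_nonneg ρ, mul_nonneg (mul_nonneg ha0 (by linarith : (0:ℝ) ≤ 1-a)) (sq_nonneg ρ)])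
  have hs0 : 0 ≤ s := Real.sqrt_nonneg _
  have key : s ≥ (1-2*a)*(1-2*b) + 4*ρ*sA*sB := by
    rcases le_or_gt ((1-2*a)*(1-2*b) + 4*ρ*sA*sB) 0 with h | h
    · linarith
    · have hid : s^2 - ((1-2*a)*(1-2*b) + 4*ρ*sA*sB)^2
          = 4*(ρ*sA*(1-2*b) - (1-2*a)*sB)^2 := by
        have e1 : (4:ℝ)*(ρ*sA*(1-2*b) - (1-2*a)*sB)^2
            = 4*(ρ^2*(sA^2)*(1-2*b)^2) - 8*(ρ*sA*sB*(1-2*a)*(1-2*b)) + 4*((1-2*a)^2*(sB^2)) := by ring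
        have e2 : s^2 - ((1-2*a)*(1-2*b) + 4*ρ*sA*sB)^2
            = s^2 - (1-2*a)^2*(1-2*b)^2 - 8*(ρ*sA*sB*(1-2*a)*(1-2*b)) - 16*(ρ^2*(sA^2*sB^2)) := by ring
        rw [e1, e2, hA, hB, hS]
        ring
      have hsq : s^2 ≥ ((1-2*a)*(1-2*b) + 4*ρ*sA*sB)^2 := by
        nlinarith [sq_nonneg (ρ*sA*(1-2*b) - (1-2*a)*sB), hid]
      nlinarith
  linarith

lemma cs_double (r : α → β → ℝ) (hr0 : ∀ x y, 0 ≤ r x y) (f : α → ℝ) (g : β → ℝ) :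
    (∑ x, ∑ y, f x * g y * r x y) ^ 2 ≤
      (∑ x, ∑ y, (f x)^2 * r x y) * (∑ x, ∑ y, (g y)^2 * r x y) := by
  have h1 : (∑ x, ∑ y, f x * g y * r x y)
      = ∑ p : α × β, (f p.1 * Real.sqrt (r p.1 p.2)) * (g p.2 * Real.sqrt (r p.1 p.2)) := by
    rw [Fintype.sum_prod_type]
    refine Finset.sum_congr rfl fun x _ => Finset.sum_congr rfl fun y _ => ?_
    rw [mul_mul_mul_comm, Real.mul_self_sqrt (hr0 x y)]
  have h2 : (∑ x, ∑ y, (f x)^2 * r x y)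
      = ∑ p : α × β, (f p.1 * Real.sqrt (r p.1 p.2))^2 := by
    rw [Fintype.sum_prod_type]
    refine Finset.sum_congr rfl fun x _ => Finset.sum_congr rfl fun y _ => ?_
    rw [mul_pow, Real.sq_sqrt (hr0 x y)]
  have h3 : (∑ x, ∑ y, (g y)^2 * r x y)
      = ∑ p : α × β, (g p.2 * Real.sqrt (r p.1 p.2))^2 := by
    rw [Fintype.sum_prod_type]
    refine Finset.sum_congr rfl fun x _ => Finset.sum_congr rfl fun y _ => ?_
    rw [mul_pow, Real.sq_sqrt (hr0 x y)]
  rw [h1, h2, h3]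
  exact Finset.sum_mul_sq_le_sq_mul_sq _ _ _

lemma maxCorrSet_bdd (r : α → β → ℝ) (hr0 : ∀ x y, 0 ≤ r x y) :
    BddAbove { t : ℝ | ∃ f : α → ℝ, ∃ g : β → ℝ,
    (∑ x, ∑ y, f x * r x y) = 0 ∧ (∑ x, ∑ y, g y * r x y) = 0 ∧
    (∑ x, ∑ y, (f x) ^ 2 * r x y) = 1 ∧ (∑ x, ∑ y, (g y) ^ 2 * r x y) = 1 ∧
    t = ∑ x, ∑ y, f x * g y * r x y } := by
  refine ⟨1, fun t ht => ?_⟩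
  obtain ⟨f, g, -, -, hf2, hg2, hteq⟩ := ht
  have := cs_double r hr0 f g
  rw [hf2, hg2, ← hteq] at this
  nlinarith

lemma maxCorr_nonneg (r : α → β → ℝ) (hr0 : ∀ x y, 0 ≤ r x y) :
    0 ≤ maxCorr r := by
  set S := { t : ℝ | ∃ f : α → ℝ, ∃ g : β → ℝ,
    (∑ x, ∑ y, f x * r x y) = 0 ∧ (∑ x, ∑ y, g y * r x y) = 0 ∧
    (∑ x, ∑ y, (f x) ^ 2 * r x y) = 1 ∧ (∑ x, ∑ y, (g y) ^ 2 * r x y) = 1 ∧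
    t = ∑ x, ∑ y, f x * g y * r x y } with hS
  by_cases hne : S.Nonempty
  · obtain ⟨t, ht⟩ := hne
    obtain ⟨f, g, h1, h2, h3, h4, h5⟩ := ht
    have hmem : t ∈ S := ⟨f, g, h1, h2, h3, h4, h5⟩
    have hmem' : -t ∈ S := by
      refine ⟨fun x => -(f x), g, ?_, h2, ?_, h4, ?_⟩
      · simp_rw [neg_mul, Finset.sum_neg_distrib]
        rw [h1, neg_zero]
      · simp_rw [neg_sq]; exact h3
      · simp_rw [neg_mul, Finset.sum_neg_distrib]
        rw [← h5]
    have l1 : t ≤ maxCorr r := le_csSup (maxCorrSet_bdd r hr0) hmem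
    have l2 : -t ≤ maxCorr r := le_csSup (maxCorrSet_bdd r hr0) hmem'
    linarith
  · have : S = ∅ := Set.not_nonempty_iff_eq_empty.mp hne
    rw [maxCorr, ← hS, this, Real.sSup_empty]

lemma sum_centered_sq (r : α → β → ℝ) (hr1 : ∑ x, ∑ y, r x y = 1) (F : α → ℝ) (c : ℝ)
    (hc : c = ∑ x, ∑ y, F x * r x y) :
    ∑ x, ∑ y, (F x - c)^2 * r x y = (∑ x, ∑ y, (F x)^2 * r x y) - c^2 := by
  have h : ∀ x y, (F x - c)^2 * r x y
      = (F x)^2 * r x y - 2*c*(F x * r x y) + c^2 * r x y := by intros; ring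
  simp_rw [h, Finset.sum_add_distrib, Finset.sum_sub_distrib, ← Finset.mul_sum]
  simp_rw [← Finset.mul_sum] at hc
  rw [← hc, hr1]; ring

lemma sum_centered_sq' (r : α → β → ℝ) (hr1 : ∑ x, ∑ y, r x y = 1) (G : β → ℝ) (c : ℝ)
    (hc : c = ∑ x, ∑ y, G y * r x y) :
    ∑ x, ∑ y, (G y - c)^2 * r x y = (∑ x, ∑ y, (G y)^2 * r x y) - c^2 := by
  have h : ∀ x y, (G y - c)^2 * r x y
      = (G y)^2 * r x y - 2*c*(G y * r x y) + c^2 * r x y := by intros; ring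
  simp_rw [h, Finset.sum_add_distrib, Finset.sum_sub_distrib, ← Finset.mul_sum]
  rw [← hc, hr1]; ring

lemma sum_centered_mul (r : α → β → ℝ) (hr1 : ∑ x, ∑ y, r x y = 1) (F : α → ℝ) (G : β → ℝ)
    (c d : ℝ) (hc : c = ∑ x, ∑ y, F x * r x y) (hd : d = ∑ x, ∑ y, G y * r x y) :
    ∑ x, ∑ y, (F x - c) * (G y - d) * r x y = (∑ x, ∑ y, F x * G y * r x y) - c*d := by
  have h : ∀ x y, (F x - c) * (G y - d) * r x y
      = F x * G y * r x y - d*(F x * r x y) - c*(G y * r x y) + (c*d) * r x y := by intros; ring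
  simp_rw [h, Finset.sum_add_distrib, Finset.sum_sub_distrib, ← Finset.mul_sum]
  simp_rw [← Finset.mul_sum] at hc hd
  rw [← hc, ← hd, hr1]; ring

lemma sum_centered_lin (r : α → β → ℝ) (hr1 : ∑ x, ∑ y, r x y = 1) (F : α → ℝ) (c : ℝ)
    (hc : c = ∑ x, ∑ y, F x * r x y) :
    ∑ x, ∑ y, (F x - c) * r x y = 0 := by
  have h : ∀ x y, (F x - c) * r x y = F x * r x y - c * r x y := by intros; ring
  simp_rw [h, Finset.sum_sub_distrib, ← Finset.mul_sum]
  simp_rw [← Finset.mul_sum] at hc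
  rw [← hc, hr1]; ring

lemma sum_centered_lin' (r : α → β → ℝ) (hr1 : ∑ x, ∑ y, r x y = 1) (G : β → ℝ) (d : ℝ)
    (hd : d = ∑ x, ∑ y, G y * r x y) :
    ∑ x, ∑ y, (G y - d) * r x y = 0 := by
  have h : ∀ x y, (G y - d) * r x y = G y * r x y - d * r x y := by intros; ring
  simp_rw [h, Finset.sum_sub_distrib, ← Finset.mul_sum]
  rw [← hd, hr1]; ring

lemma double_sum_nonneg {h : α → β → ℝ} (hh : ∀ x y, 0 ≤ h x y) :
    0 ≤ ∑ x, ∑ y, h x y :=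
  Finset.sum_nonneg fun x _ => Finset.sum_nonneg fun y _ => hh x y

lemma cov_bound (r : α → β → ℝ) (hr0 : ∀ x y, 0 ≤ r x y) (hr1 : ∑ x, ∑ y, r x y = 1)
    (F : α → ℝ) (G : β → ℝ) (c d : ℝ)
    (hc : c = ∑ x, ∑ y, F x * r x y) (hd : d = ∑ x, ∑ y, G y * r x y) :
    (∑ x, ∑ y, F x * G y * r x y) - c*d ≤
      maxCorr r * Real.sqrt ((∑ x, ∑ y, (F x)^2 * r x y) - c^2)
        * Real.sqrt ((∑ x, ∑ y, (G y)^2 * r x y) - d^2) := by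
  have hVU : (∑ x, ∑ y, (F x)^2 * r x y) - c^2 = ∑ x, ∑ y, (F x - c)^2 * r x y :=
    (sum_centered_sq r hr1 F c hc).symm
  have hVW : (∑ x, ∑ y, (G y)^2 * r x y) - d^2 = ∑ x, ∑ y, (G y - d)^2 * r x y :=
    (sum_centered_sq' r hr1 G d hd).symm
  have hcov : (∑ x, ∑ y, F x * G y * r x y) - c*d
      = ∑ x, ∑ y, (F x - c) * (G y - d) * r x y :=
    (sum_centered_mul r hr1 F G c d hc hd).symm
  set VU := (∑ x, ∑ y, (F x)^2 * r x y) - c^2 with hVUdef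
  set VW := (∑ x, ∑ y, (G y)^2 * r x y) - d^2 with hVWdef
  have hVU0 : 0 ≤ VU := hVU ▸ double_sum_nonneg fun x y => mul_nonneg (sq_nonneg _) (hr0 x y)
  have hVW0 : 0 ≤ VW := hVW ▸ double_sum_nonneg fun x y => mul_nonneg (sq_nonneg _) (hr0 x y)
  rcases eq_or_lt_of_le hVU0 with hU | hU
  · have hz : ∀ x y, (F x - c)^2 * r x y = 0 := by
      have h0 : ∑ x, ∑ y, (F x - c)^2 * r x y = 0 := by rw [← hVU, ← hU]
      intro x y
      have hx := (Finset.sum_eq_zero_iff_of_nonneg (fun x _ =>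
        Finset.sum_nonneg fun y _ => mul_nonneg (sq_nonneg _) (hr0 x y))).mp h0 x (mem_univ x)
      exact (Finset.sum_eq_zero_iff_of_nonneg (fun y _ =>
        mul_nonneg (sq_nonneg _) (hr0 x y))).mp hx y (mem_univ y)
    have hcov0 : (∑ x, ∑ y, F x * G y * r x y) - c*d = 0 := by
      rw [hcov]
      refine Finset.sum_eq_zero fun x _ => Finset.sum_eq_zero fun y _ => ?_
      rcases mul_eq_zero.mp (hz x y) with h | h
      · have : F x - c = 0 := sq_eq_zero_iff.mp h
        rw [this]; ring
      · rw [h]; ring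
    rw [hcov0, ← hU, Real.sqrt_zero]
    simp
  rcases eq_or_lt_of_le hVW0 with hW | hW
  · have hz : ∀ x y, (G y - d)^2 * r x y = 0 := by
      have h0 : ∑ x, ∑ y, (G y - d)^2 * r x y = 0 := by rw [← hVW, ← hW]
      intro x y
      have hx := (Finset.sum_eq_zero_iff_of_nonneg (fun x _ =>
        Finset.sum_nonneg fun y _ => mul_nonneg (sq_nonneg _) (hr0 x y))).mp h0 x (mem_univ x)
      exact (Finset.sum_eq_zero_iff_of_nonneg (fun y _ =>
        mul_nonneg (sq_nonneg _) (hr0 x y))).mp hx y (mem_univ y)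
    have hcov0 : (∑ x, ∑ y, F x * G y * r x y) - c*d = 0 := by
      rw [hcov]
      refine Finset.sum_eq_zero fun x _ => Finset.sum_eq_zero fun y _ => ?_
      rcases mul_eq_zero.mp (hz x y) with h | h
      · have : G y - d = 0 := sq_eq_zero_iff.mp h
        rw [this]; ring
      · rw [h]; ring
    rw [hcov0, ← hW, Real.sqrt_zero]
    simp
  · set sU := Real.sqrt VU with hsUdef
    set sW := Real.sqrt VW with hsWdef
    have hsU : 0 < sU := Real.sqrt_pos.mpr hU
    have hsW : 0 < sW := Real.sqrt_pos.mpr hW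
    have hsU2 : sU^2 = VU := Real.sq_sqrt hVU0
    have hsW2 : sW^2 = VW := Real.sq_sqrt hVW0
    set f : α → ℝ := fun x => (F x - c) / sU with hf
    set g : β → ℝ := fun y => (G y - d) / sW with hg
    have hmem : ((∑ x, ∑ y, F x * G y * r x y) - c*d) / (sU * sW) ∈
        { t : ℝ | ∃ f : α → ℝ, ∃ g : β → ℝ,
          (∑ x, ∑ y, f x * r x y) = 0 ∧ (∑ x, ∑ y, g y * r x y) = 0 ∧
          (∑ x, ∑ y, (f x) ^ 2 * r x y) = 1 ∧ (∑ x, ∑ y, (g y) ^ 2 * r x y) = 1 ∧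
          t = ∑ x, ∑ y, f x * g y * r x y } := by
      refine ⟨f, g, ?_, ?_, ?_, ?_, ?_⟩
      · have : ∀ x y, f x * r x y = ((F x - c) * r x y) / sU := by
          intro x y; rw [hf]; ring
        simp_rw [this, ← Finset.sum_div]
        rw [sum_centered_lin r hr1 F c hc, zero_div]
      · have : ∀ x y, g y * r x y = ((G y - d) * r x y) / sW := by
          intro x y; rw [hg]; ring
        simp_rw [this, ← Finset.sum_div]
        rw [sum_centered_lin' r hr1 G d hd, zero_div]
      · have : ∀ x y, (f x)^2 * r x y = ((F x - c)^2 * r x y) / sU^2 := by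
          intro x y; rw [hf]; ring
        simp_rw [this, ← Finset.sum_div]
        rw [← hVU, hsU2, div_self (ne_of_gt hU)]
      · have : ∀ x y, (g y)^2 * r x y = ((G y - d)^2 * r x y) / sW^2 := by
          intro x y; rw [hg]; ring
        simp_rw [this, ← Finset.sum_div]
        rw [← hVW, hsW2, div_self (ne_of_gt hW)]
      · have : ∀ x y, f x * g y * r x y = ((F x - c) * (G y - d) * r x y) / (sU * sW) := by
          intro x y; rw [hf, hg]; ring
        simp_rw [this, ← Finset.sum_div]
        rw [← hcov]
    have hle : ((∑ x, ∑ y, F x * G y * r x y) - c*d) / (sU * sW) ≤ maxCorr r :=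
      le_csSup (maxCorrSet_bdd r hr0) hmem
    have hpos : 0 < sU * sW := mul_pos hsU hsW
    calc (∑ x, ∑ y, F x * G y * r x y) - c*d
        = (((∑ x, ∑ y, F x * G y * r x y) - c*d) / (sU * sW)) * (sU * sW) := by
          field_simp
      _ ≤ maxCorr r * (sU * sW) := mul_le_mul_of_nonneg_right hle (le_of_lt hpos)
      _ = maxCorr r * sU * sW := by ring

end Helpers

/-- For binary `B, B̂` with `B → X → Y → B̂` and `Pr[B=0] = a` (with `true`
encoding the symbol `0`),
`Pr[B ≠ B̂] ≥ (1/2)(1 − √(1 − 4a(1−a)(1 − ρₘ(X;Y)²)))`. -/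
theorem error_prob_lower_bound_unbiased {α β : Type*} [Fintype α] [Fintype β]
    (r : α → β → ℝ) (hr0 : ∀ x y, 0 ≤ r x y) (hr1 : ∑ x, ∑ y, r x y = 1)
    (u : α → Bool → ℝ) (hu0 : ∀ x c, 0 ≤ u x c)
    (hu1 : ∀ x, u x false + u x true = 1)
    (w : β → Bool → ℝ) (hw0 : ∀ y c, 0 ≤ w y c)
    (hw1 : ∀ y, w y false + w y true = 1)
    (a : ℝ)
    (ha : a = ∑ x, ∑ y, r x y * u x true) :
    (∑ x, ∑ y, r x y * (u x true * w y false + u x false * w y true)) ≥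
      (1 / 2) * (1 - Real.sqrt (1 - 4 * a * (1 - a) * (1 - (maxCorr r) ^ 2))) := by
  set U : α → ℝ := fun x => u x true with hUdef
  set W : β → ℝ := fun y => w y true with hWdef
  have ha' : a = ∑ x, ∑ y, U x * r x y := by
    rw [ha]
    exact Finset.sum_congr rfl fun x _ => Finset.sum_congr rfl fun y _ => mul_comm _ _
  set b : ℝ := ∑ x, ∑ y, W y * r x y with hbdef
  set E : ℝ := ∑ x, ∑ y, U x * W y * r x y with hEdef
  have hUle : ∀ x, U x ≤ 1 := fun x => by
    have := hu1 x; have := hu0 x false; simp only [hUdef]; linarith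
  have hU0 : ∀ x, 0 ≤ U x := fun x => hu0 x true
  have hWle : ∀ y, W y ≤ 1 := fun y => by
    have := hw1 y; have := hw0 y false; simp only [hWdef]; linarith
  have hW0 : ∀ y, 0 ≤ W y := fun y => hw0 y true
  -- error probability identity
  have hPe : (∑ x, ∑ y, r x y * (u x true * w y false + u x false * w y true))
      = a + b - 2*E := by
    have h : ∀ x y, r x y * (u x true * w y false + u x false * w y true)
        = U x * r x y + W y * r x y - 2*(U x * W y * r x y) := by
      intro x y
      have h1 : u x false = 1 - U x := by have := hu1 x; simp only [hUdef]; linarith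
      have h2 : w y false = 1 - W y := by have := hw1 y; simp only [hWdef]; linarith
      rw [h1, h2]
      simp only [hUdef, hWdef]
      ring
    simp_rw [h]
    simp_rw [Finset.sum_sub_distrib]
    simp_rw [Finset.sum_add_distrib]
    simp_rw [← Finset.mul_sum]
    simp_rw [← Finset.mul_sum] at ha'
    rw [← ha', ← hbdef, ← hEdef]
  -- basic bounds
  have ha0 : 0 ≤ a := ha' ▸ double_sum_nonneg fun x y => mul_nonneg (hU0 x) (hr0 x y)
  have hb0 : 0 ≤ b := hbdef ▸ double_sum_nonneg fun x y => mul_nonneg (hW0 y) (hr0 x y)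
  have ha1 : a ≤ 1 := by
    rw [ha', ← hr1]
    refine Finset.sum_le_sum fun x _ => Finset.sum_le_sum fun y _ => ?_
    calc U x * r x y ≤ 1 * r x y := mul_le_mul_of_nonneg_right (hUle x) (hr0 x y)
      _ = r x y := one_mul _
  have hb1 : b ≤ 1 := by
    rw [hbdef, ← hr1]
    refine Finset.sum_le_sum fun x _ => Finset.sum_le_sum fun y _ => ?_
    calc W y * r x y ≤ 1 * r x y := mul_le_mul_of_nonneg_right (hWle y) (hr0 x y)
      _ = r x y := one_mul _
  -- variance bounds
  have hVUle : (∑ x, ∑ y, (U x)^2 * r x y) - a^2 ≤ a*(1-a) := by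
    have h1 : (∑ x, ∑ y, (U x)^2 * r x y) ≤ ∑ x, ∑ y, U x * r x y := by
      refine Finset.sum_le_sum fun x _ => Finset.sum_le_sum fun y _ => ?_
      exact mul_le_mul_of_nonneg_right (by nlinarith [hU0 x, hUle x]) (hr0 x y)
    rw [← ha'] at h1
    nlinarith
  have hVWle : (∑ x, ∑ y, (W y)^2 * r x y) - b^2 ≤ b*(1-b) := by
    have h1 : (∑ x, ∑ y, (W y)^2 * r x y) ≤ ∑ x, ∑ y, W y * r x y := by
      refine Finset.sum_le_sum fun x _ => Finset.sum_le_sum fun y _ => ?_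
      exact mul_le_mul_of_nonneg_right (by nlinarith [hW0 y, hWle y]) (hr0 x y)
    rw [← hbdef] at h1
    nlinarith
  -- covariance bound
  have hcov : E - a*b ≤
      maxCorr r * Real.sqrt ((∑ x, ∑ y, (U x)^2 * r x y) - a^2)
        * Real.sqrt ((∑ x, ∑ y, (W y)^2 * r x y) - b^2) :=
    cov_bound r hr0 hr1 U W a b ha' hbdef
  have hρ0 : 0 ≤ maxCorr r := maxCorr_nonneg r hr0
  have hmono : maxCorr r * Real.sqrt ((∑ x, ∑ y, (U x)^2 * r x y) - a^2)
        * Real.sqrt ((∑ x, ∑ y, (W y)^2 * r x y) - b^2)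
      ≤ maxCorr r * Real.sqrt (a*(1-a)) * Real.sqrt (b*(1-b)) := by
    have s1 : Real.sqrt ((∑ x, ∑ y, (U x)^2 * r x y) - a^2) ≤ Real.sqrt (a*(1-a)) :=
      Real.sqrt_le_sqrt hVUle
    have s2 : Real.sqrt ((∑ x, ∑ y, (W y)^2 * r x y) - b^2) ≤ Real.sqrt (b*(1-b)) :=
      Real.sqrt_le_sqrt hVWle
    have := mul_le_mul (mul_le_mul_of_nonneg_left s1 hρ0) s2 (Real.sqrt_nonneg _)
      (mul_nonneg hρ0 (Real.sqrt_nonneg _))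
    linarith [this]
  have hscalar := scalar_ineq a b (maxCorr r) ha0 ha1 hb0 hb1 hρ0
  rw [hPe]
  linarith [hcov, hmono, hscalar]
end

section
/- If X is uniformly distributed on [m] and Y is a discrete random variable, then P_e(X|Y) ≥ 1 − 1/m − ρ_m(X;Y)(1 − 1/m). -/
open Finset Real

lemma Real.sSup_nonneg_of_neg_mem {S : Set ℝ} (hS : ∀ t ∈ S, -t ∈ S) : 0 ≤ sSup S := by
  by_cases hb : BddAbove S
  · obtain rfl | ⟨t, ht⟩ := S.eq_empty_or_nonempty
    · exact Real.sSup_empty.ge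
    · have h₁ := le_csSup hb ht
      have h₂ := le_csSup hb (hS t ht)
      linarith
  · exact (Real.sSup_of_not_bddAbove hb).ge

section JointDistribution

variable {α β : Type*} [Fintype α] [Fintype β]

variable (r : α → β → ℝ) in
noncomputable def jointMean : (α → β → ℝ) →ₗ[ℝ] ℝ where
  toFun u := ∑ x, ∑ y, u x y * r x y
  map_add' u v := by simp only [Pi.add_apply, add_mul, sum_add_distrib]
  map_smul' c u := by simp only [Pi.smul_apply, smul_eq_mul, mul_assoc, ← mul_sum, RingHom.id_apply]

variable (r : α → β → ℝ) in
noncomputable def jointCov (u v : α → β → ℝ) : ℝ :=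
  jointMean r (u * v) - jointMean r u * jointMean r v

variable {r : α → β → ℝ}

lemma jointMean_apply (u : α → β → ℝ) : jointMean r u = ∑ x, ∑ y, u x y * r x y := rfl

lemma jointMean_one (hr : ∑ x, ∑ y, r x y = 1) : jointMean r 1 = 1 := by
  simp [jointMean_apply, hr]

lemma jointMean_mono (hr : ∀ x y, 0 ≤ r x y) {u v : α → β → ℝ} (huv : u ≤ v) :
    jointMean r u ≤ jointMean r v :=
  sum_le_sum fun x _ => sum_le_sum fun y _ => mul_le_mul_of_nonneg_right (huv x y) (hr x y)

lemma jointMean_mul_self_nonneg (hr : ∀ x y, 0 ≤ r x y) (u : α → β → ℝ) :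
    0 ≤ jointMean r (u * u) :=
  sum_nonneg fun x _ => sum_nonneg fun y _ => mul_nonneg (mul_self_nonneg _) (hr x y)

lemma jointMean_mul_sq_le (hr : ∀ x y, 0 ≤ r x y) (u v : α → β → ℝ) :
    jointMean r (u * v) ^ 2 ≤ jointMean r (u * u) * jointMean r (v * v) := by
  simp only [jointMean_apply, Pi.mul_apply, ← Fintype.sum_prod_type']
  refine sum_sq_le_sum_mul_sum_of_sq_le_mul _ (fun z _ => ?_) (fun z _ => ?_) (fun z _ => ?_)
  · exact mul_nonneg (mul_self_nonneg _) (hr _ _)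
  · exact mul_nonneg (mul_self_nonneg _) (hr _ _)
  · exact le_of_eq (by ring)

lemma jointMean_centered (hr : ∑ x, ∑ y, r x y = 1) (u : α → β → ℝ) :
    jointMean r (u - jointMean r u • 1) = 0 := by
  rw [map_sub, map_smul, jointMean_one hr, smul_eq_mul, mul_one, sub_self]

lemma jointMean_centered_mul_centered (hr : ∑ x, ∑ y, r x y = 1) (u v : α → β → ℝ) :
    jointMean r ((u - jointMean r u • 1) * (v - jointMean r v • 1)) = jointCov r u v := by
  set a := jointMean r u
  set b := jointMean r v
  have hexpand : (u - a • 1) * (v - b • 1) = u * v - b • u - a • v + (a * b) • 1 := by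
    funext x y
    simp only [Pi.mul_apply, Pi.sub_apply, Pi.add_apply, Pi.smul_apply, Pi.one_apply, smul_eq_mul]
    ring
  rw [hexpand, map_add, map_sub, map_sub, map_smul, map_smul, map_smul, jointMean_one hr, jointCov]
  simp only [smul_eq_mul]
  ring

lemma jointCov_self_nonneg (hr₀ : ∀ x y, 0 ≤ r x y) (hr₁ : ∑ x, ∑ y, r x y = 1)
    (u : α → β → ℝ) : 0 ≤ jointCov r u u :=
  jointMean_centered_mul_centered hr₁ u u ▸ jointMean_mul_self_nonneg hr₀ _

lemma jointCov_sq_le (hr₀ : ∀ x y, 0 ≤ r x y) (hr₁ : ∑ x, ∑ y, r x y = 1)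
    (u v : α → β → ℝ) : jointCov r u v ^ 2 ≤ jointCov r u u * jointCov r v v := by
  simpa only [jointMean_centered_mul_centered hr₁] using jointMean_mul_sq_le hr₀
    (u - jointMean r u • 1) (v - jointMean r v • 1)

lemma jointMean_smul_centered_mul (hr : ∑ x, ∑ y, r x y = 1) (u v : α → β → ℝ) (c d : ℝ) :
    jointMean r ((c • (u - jointMean r u • 1)) * (d • (v - jointMean r v • 1))) =
      c * d * jointCov r u v := by
  rw [smul_mul_smul_comm, map_smul, jointMean_centered_mul_centered hr, smul_eq_mul]

lemma le_maxCorr (hr : ∀ x y, 0 ≤ r x y) {f : α → ℝ} {g : β → ℝ}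
    (hf₀ : ∑ x, ∑ y, f x * r x y = 0) (hg₀ : ∑ x, ∑ y, g y * r x y = 0)
    (hf₁ : ∑ x, ∑ y, f x ^ 2 * r x y = 1) (hg₁ : ∑ x, ∑ y, g y ^ 2 * r x y = 1) :
    ∑ x, ∑ y, f x * g y * r x y ≤ maxCorr r := by
  refine le_csSup ⟨1, ?_⟩ ⟨f, g, hf₀, hg₀, hf₁, hg₁, rfl⟩
  rintro _ ⟨f, g, -, -, hf₁, hg₁, rfl⟩
  have hcs := jointMean_mul_sq_le hr (fun x _ => f x) (fun _ y => g y)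
  simp only [sq] at hf₁ hg₁
  simp only [jointMean_apply, Pi.mul_apply, hf₁, hg₁, mul_one] at hcs
  exact (le_abs_self _).trans ((sq_le_one_iff_abs_le_one _).mp hcs)

variable (r) in
lemma maxCorr_nonneg_s10 : 0 ≤ maxCorr r :=
  Real.sSup_nonneg_of_neg_mem <| by
    rintro _ ⟨f, g, hf₀, hg₀, hf₁, hg₁, rfl⟩
    refine ⟨-f, g, ?_, hg₀, ?_, hg₁, ?_⟩ <;>
      simp only [Pi.neg_apply, neg_mul, sum_neg_distrib, neg_sq, hf₀, hf₁, neg_zero]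

lemma mul_mul_jointCov_le_maxCorr (hr₀ : ∀ x y, 0 ≤ r x y) (hr₁ : ∑ x, ∑ y, r x y = 1)
    (f : α → ℝ) (g : β → ℝ) {c d : ℝ}
    (hc : c * c * jointCov r (fun x _ => f x) (fun x _ => f x) = 1)
    (hd : d * d * jointCov r (fun _ y => g y) (fun _ y => g y) = 1) :
    c * d * jointCov r (fun x _ => f x) (fun _ y => g y) ≤ maxCorr r := by
  set u : α → β → ℝ := fun x _ => f x
  set v : α → β → ℝ := fun _ y => g y
  set f' : α → ℝ := fun x => c * (f x - jointMean r u)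
  set g' : β → ℝ := fun y => d * (g y - jointMean r v)
  have hf' : (fun x (_ : β) => f' x) = c • (u - jointMean r u • 1) := by
    funext x y; simp [f', u]
  have hg' : (fun (_ : α) y => g' y) = d • (v - jointMean r v • 1) := by
    funext x y; simp [g', v]
  rw [← jointMean_smul_centered_mul hr₁, ← hf', ← hg']
  refine le_maxCorr hr₀ ?_ ?_ ?_ ?_
  · change jointMean r (fun x _ => f' x) = 0
    rw [hf', map_smul, jointMean_centered hr₁, smul_zero]
  · change jointMean r (fun _ y => g' y) = 0
    rw [hg', map_smul, jointMean_centered hr₁, smul_zero]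
  · have := jointMean_smul_centered_mul hr₁ u u c c
    rw [hc, ← hf'] at this
    simpa only [jointMean_apply, Pi.mul_apply, sq] using this
  · have := jointMean_smul_centered_mul hr₁ v v d d
    rw [hd, ← hg'] at this
    simpa only [jointMean_apply, Pi.mul_apply, sq] using this

lemma jointCov_le_maxCorr_mul_sqrt (hr₀ : ∀ x y, 0 ≤ r x y) (hr₁ : ∑ x, ∑ y, r x y = 1)
    (f : α → ℝ) (g : β → ℝ) :
    jointCov r (fun x _ => f x) (fun _ y => g y) ≤
      maxCorr r * √(jointCov r (fun x _ => f x) (fun x _ => f x)) *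
        √(jointCov r (fun _ y => g y) (fun _ y => g y)) := by
  set a := jointCov r (fun x _ => f x) (fun x _ => f x)
  set b := jointCov r (fun _ y => g y) (fun _ y => g y)
  have hcs : jointCov r (fun x _ => f x) (fun _ y => g y) ^ 2 ≤ a * b :=
    jointCov_sq_le hr₀ hr₁ _ _
  have ha₀ : 0 ≤ a := jointCov_self_nonneg hr₀ hr₁ _
  have hb₀ : 0 ≤ b := jointCov_self_nonneg hr₀ hr₁ _
  obtain ha | ha := ha₀.eq_or_lt
  · rw [← ha, zero_mul] at hcs
    rw [← ha, sqrt_zero, mul_zero, zero_mul]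
    nlinarith
  obtain hb | hb := hb₀.eq_or_lt
  · rw [← hb, mul_zero] at hcs
    rw [← hb, sqrt_zero, mul_zero]
    nlinarith
  have hsa : √a ≠ 0 := (sqrt_pos.mpr ha).ne'
  have hsb : √b ≠ 0 := (sqrt_pos.mpr hb).ne'
  have hle := mul_mul_jointCov_le_maxCorr hr₀ hr₁ f g (c := (√a)⁻¹) (d := (√b)⁻¹)
    (by rw [← mul_inv, mul_self_sqrt ha.le, inv_mul_cancel₀ ha.ne'])
    (by rw [← mul_inv, mul_self_sqrt hb.le, inv_mul_cancel₀ hb.ne'])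
  calc jointCov r (fun x _ => f x) (fun _ y => g y)
      = (√a)⁻¹ * (√b)⁻¹ * jointCov r (fun x _ => f x) (fun _ y => g y) * (√a * √b) := by
        field_simp
    _ ≤ maxCorr r * (√a * √b) := by gcongr
    _ = maxCorr r * √a * √b := by ring

end JointDistribution

section Indicator

variable {α β : Type*} [Fintype α] [DecidableEq α] [Fintype β] {r : α → β → ℝ}

lemma jointMean_indicator (a : α) :
    jointMean r (fun x _ => if x = a then 1 else 0) = ∑ y, r a y := by
  simp [jointMean_apply]

lemma jointCov_indicator_self (a : α) :
    jointCov r (fun x _ => if x = a then 1 else 0) (fun x _ => if x = a then 1 else 0) =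
      (∑ y, r a y) * (1 - ∑ y, r a y) := by
  have hidem : ((fun x (_ : β) => if x = a then (1 : ℝ) else 0) * fun x _ => if x = a then 1 else 0)
      = fun x _ => if x = a then 1 else 0 := by
    funext x y; by_cases h : x = a <;> simp [h]
  rw [jointCov, hidem, jointMean_indicator]
  ring

lemma jointCov_indicator (a : α) (g : β → ℝ) :
    jointCov r (fun x _ => if x = a then 1 else 0) (fun _ y => g y) =
      ∑ y, r a y * g y - (∑ y, r a y) * jointMean r (fun _ y => g y) := by
  rw [jointCov, jointMean_indicator]
  simp [jointMean_apply, mul_comm]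

end Indicator

section Kernel

variable {α β ι : Type*} [Fintype α] [Fintype β] [Fintype ι] {r : α → β → ℝ}
  {F : β → ι → ℝ}

lemma sum_jointMean_kernel (hr : ∑ x, ∑ y, r x y = 1) (hF : ∀ y, ∑ i, F y i = 1) :
    ∑ i, jointMean r (fun _ y => F y i) = 1 := by
  rw [← map_sum, ← jointMean_one hr]
  congr 1
  funext x y
  simp [hF]

lemma sum_jointCov_kernel_self_le (hr₀ : ∀ x y, 0 ≤ r x y) (hr₁ : ∑ x, ∑ y, r x y = 1)
    (hF₀ : ∀ y i, 0 ≤ F y i) (hF₁ : ∀ y, ∑ i, F y i = 1) :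
    ∑ i, jointCov r (fun _ y => F y i) (fun _ y => F y i) ≤ 1 - 1 / Fintype.card ι := by
  have hsq : ∑ i, jointMean r ((fun _ y => F y i) * fun _ y => F y i) ≤ 1 := by
    rw [← map_sum, ← jointMean_one hr₁]
    refine jointMean_mono hr₀ fun x y => ?_
    have hF_le_one : ∀ i, F y i ≤ 1 := fun i =>
      hF₁ y ▸ single_le_sum (fun j _ => hF₀ y j) (mem_univ i)
    simp only [Finset.sum_apply, Pi.mul_apply, Pi.one_apply]
    calc ∑ i, F y i * F y i ≤ ∑ i, F y i :=
          sum_le_sum fun i _ => mul_le_of_le_one_right (hF₀ y i) (hF_le_one i)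
      _ = 1 := hF₁ y
  have hmean : 1 / (Fintype.card ι : ℝ) ≤ ∑ i, jointMean r (fun _ y => F y i) ^ 2 := by
    refine div_le_of_le_mul₀ (Nat.cast_nonneg _) (sum_nonneg fun i _ => sq_nonneg _) ?_
    simpa [sum_jointMean_kernel hr₁ hF₁, mul_comm] using
      sq_sum_le_card_mul_sum_sq (s := univ) (f := fun i => jointMean r (fun _ y => F y i))
  rw [sum_congr rfl fun i _ => jointCov.eq_1 r _ _, sum_sub_distrib]
  simp only [sq] at hmean
  linarith

end Kernel

lemma sum_jointCov_indicator_kernel {α β : Type*} [Fintype α] [DecidableEq α] [Fintype β]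
    {r : α → β → ℝ} {F : β → α → ℝ} {c : ℝ} (hr : ∑ x, ∑ y, r x y = 1)
    (hunif : ∀ x, ∑ y, r x y = c) (hF : ∀ y, ∑ x, F y x = 1) :
    ∑ a, jointCov r (fun x _ => if x = a then 1 else 0) (fun _ y => F y a) =
      ∑ x, ∑ y, r x y * F y x - c := by
  simp only [jointCov_indicator, hunif, sum_sub_distrib, ← mul_sum, sum_jointMean_kernel hr hF,
    mul_one]

lemma sum_sqrt_mul_sqrt_le_one_sub_one_div_card {ι : Type*} [Fintype ι] [Nonempty ι]
    {V : ι → ℝ} (hV₀ : ∀ i, 0 ≤ V i) (hV : ∑ i, V i ≤ 1 - 1 / Fintype.card ι) :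
    ∑ i, √(1 / Fintype.card ι * (1 - 1 / Fintype.card ι)) * √(V i) ≤ 1 - 1 / Fintype.card ι := by
  set n : ℝ := (Fintype.card ι : ℝ)
  have hn : 1 ≤ n := Nat.one_le_cast.mpr Fintype.card_pos
  have hs : 0 ≤ 1 - 1 / n := sub_nonneg.mpr <| (div_le_one (by positivity)).mpr hn
  calc ∑ i, √(1 / n * (1 - 1 / n)) * √(V i)
      ≤ √(∑ _i : ι, 1 / n * (1 - 1 / n)) * √(∑ i, V i) :=
        sum_sqrt_mul_sqrt_le _ (fun _ => by positivity) hV₀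
    _ ≤ √(1 - 1 / n) * √(1 - 1 / n) := by
        gcongr
        simp only [sum_const, card_univ, nsmul_eq_mul]
        field_simp
        rfl
    _ = 1 - 1 / n := mul_self_sqrt hs

theorem fano_maxCorr_bound_uniform_general {β : Type*} [Fintype β] (m : ℕ)
    (p : Fin m → β → ℝ) (hp0 : ∀ x y, 0 ≤ p x y) (hp1 : ∑ x, ∑ y, p x y = 1)
    (hunif : ∀ x, ∑ y, p x y = 1 / (m : ℝ))
    (F : β → Fin m → ℝ) (hF0 : ∀ y x, 0 ≤ F y x) (hF1 : ∀ y, ∑ x, F y x = 1) :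
    1 - ∑ x, ∑ y, p x y * F y x ≥
      1 - 1 / (m : ℝ) - maxCorr p * (1 - 1 / (m : ℝ)) := by
  have : Nonempty (Fin m) := by
    by_contra h
    simp [not_nonempty_iff.mp h] at hp1
  set σ := √(1 / m * (1 - 1 / m))
  set V : Fin m → ℝ := fun a => jointCov p (fun _ y => F y a) (fun _ y => F y a)
  have hcov : ∀ a, jointCov p (fun x _ => if x = a then 1 else 0) (fun _ y => F y a) ≤
      maxCorr p * (σ * √(V a)) := fun a => by
    have := jointCov_le_maxCorr_mul_sqrt hp0 hp1 (fun x => if x = a then 1 else 0) (F · a)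
    rwa [jointCov_indicator_self, hunif, mul_assoc] at this
  have hσV : ∑ a, σ * √(V a) ≤ 1 - 1 / m := by
    simpa only [Fintype.card_fin] using sum_sqrt_mul_sqrt_le_one_sub_one_div_card
      (fun a => jointCov_self_nonneg hp0 hp1 _) (sum_jointCov_kernel_self_le hp0 hp1 hF0 hF1)
  have hsucc : ∑ x, ∑ y, p x y * F y x - 1 / m ≤ maxCorr p * (1 - 1 / m) :=
    calc ∑ x, ∑ y, p x y * F y x - 1 / m
        = ∑ a, jointCov p (fun x _ => if x = a then 1 else 0) (fun _ y => F y a) :=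
          (sum_jointCov_indicator_kernel hp1 hunif hF1).symm
      _ ≤ ∑ a, maxCorr p * (σ * √(V a)) := sum_le_sum fun a _ => hcov a
      _ ≤ maxCorr p * (1 - 1 / m) := by
          rw [← mul_sum]
          exact mul_le_mul_of_nonneg_left hσV (maxCorr_nonneg_s10 p)
  linarith

/-- For uniformly distributed `X` on `[m]` and any (possibly randomized)
estimator `F` of `X` from `Y`, the error probability is at least
`1 − 1/m − ρₘ(X;Y)(1 − 1/m)`. -/
theorem fano_maxCorr_bound_uniform {β : Type*} [Fintype β] (m : ℕ) (hm : 0 < m)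
    (p : Fin m → β → ℝ) (hp0 : ∀ x y, 0 ≤ p x y) (hp1 : ∑ x, ∑ y, p x y = 1)
    (hunif : ∀ x, ∑ y, p x y = 1 / (m : ℝ))
    (F : β → Fin m → ℝ) (hF0 : ∀ y x, 0 ≤ F y x) (hF1 : ∀ y, ∑ x, F y x = 1) :
    1 - ∑ x, ∑ y, p x y * F y x ≥
      1 - 1 / (m : ℝ) - maxCorr p * (1 - 1 / (m : ℝ)) :=
  fano_maxCorr_bound_uniform_general m p hp0 hp1 hunif F hF0 hF1
end
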